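/- For every positive integer n, β(n²) = Σ_{dk = n} d·μ(d)·σ₂(k), where μ is the Möbius function and σ₂(k) = Σ_{e∣k} e². -/

import Mathlib

/-!
Since `β = id * λ` is a Dirichlet convolution of multiplicative functions, both `n ↦ β(n²)` and
`(id · μ) * σ₂` are multiplicative, so it suffices to compare them at prime powers `p ^ k`.
There `β(p^(2k)) = ∑_{i ≤ 2k} (-p)^i`; its even-index terms give `σ₂(p^k)` and its odd-index terms
give `-p σ₂(p^(k-1))`, which is `((id · μ) * σ₂)(p^k)` because `μ` vanishes at `p^j` for `j ≥ 2`.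
-/

/-- The Liouville function `λ(n) = (-1)^Ω(n)`. -/
def lam (n : ℕ) : ℤ := (-1) ^ (ArithmeticFunction.cardFactors n)

/-- The alternating sum-of-divisors function `β(n) = ∑_{d ∣ n} d · λ(n/d)`. -/
def beta (n : ℕ) : ℤ := ∑ d ∈ n.divisors, (d : ℤ) * lam (n / d)

open ArithmeticFunction Finset

namespace ArithmeticFunction

variable {R : Type*}

def compSq [Zero R] (f : ArithmeticFunction R) : ArithmeticFunction R :=
  ⟨fun n => f (n ^ 2), by simp⟩

@[simp]
theorem compSq_apply [Zero R] (f : ArithmeticFunction R) (n : ℕ) : f.compSq n = f (n ^ 2) :=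
  rfl

theorem IsMultiplicative.compSq [MonoidWithZero R] {f : ArithmeticFunction R}
    (hf : f.IsMultiplicative) : f.compSq.IsMultiplicative :=
  ⟨by simpa using hf.map_one, fun {m n} hmn => by
    simpa [mul_pow] using hf.map_mul_of_coprime (hmn.pow 2 2)⟩

theorem pmul_id_moebius_mul_apply_prime_pow_succ [CommRing R] (g : ArithmeticFunction R)
    {p : ℕ} (hp : p.Prime) (k : ℕ) :
    (pmul ((ArithmeticFunction.id : ArithmeticFunction ℕ) : ArithmeticFunction R)
        (moebius : ArithmeticFunction R) * g) (p ^ (k + 1)) =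
      g (p ^ (k + 1)) - p * g (p ^ k) := by
  rw [mul_apply, Nat.sum_divisorsAntidiagonal (fun a b => pmul _ _ a * g b),
    Nat.sum_divisors_prime_pow hp, sum_range_succ', sum_range_succ', sum_eq_zero fun j _ => ?_]
  · simp [pmul_apply, moebius_apply_prime hp, pow_succ, hp.pos]
    ring
  · simp [pmul_apply, moebius_apply_prime_pow hp]

end ArithmeticFunction

theorem alternating_sum_range_pow {R : Type*} [CommRing R] (x : R) (k : ℕ) :
    ∑ i ∈ range (2 * k + 1), (-1) ^ i * x ^ i =
      ∑ i ∈ range (k + 1), x ^ (2 * i) - x * ∑ i ∈ range k, x ^ (2 * i) := by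
  induction k with
  | zero => simp
  | succ k ih =>
    rw [show 2 * (k + 1) + 1 = 2 * k + 1 + 1 + 1 by ring, sum_range_succ, sum_range_succ, ih,
      sum_range_succ _ (k + 1), sum_range_succ _ k, (odd_two_mul_add_one k).neg_one_pow,
      Even.neg_one_pow ⟨k + 1, by ring⟩]
    ring

theorem beta_eq_id_mul_liouville (n : ℕ) :
    beta n =
      (((ArithmeticFunction.id : ArithmeticFunction ℕ) : ArithmeticFunction ℤ) * liouville) n := by
  rw [mul_apply, Nat.sum_divisorsAntidiagonal (fun a b =>
    ((ArithmeticFunction.id : ArithmeticFunction ℕ) : ArithmeticFunction ℤ) a * liouville b), beta]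
  refine sum_congr rfl fun d hd => ?_
  have hquot : n / d ≠ 0 := (Nat.div_ne_zero_iff_of_dvd (Nat.dvd_of_mem_divisors hd)).2
    ⟨Nat.ne_zero_of_mem_divisors hd, (Nat.pos_of_mem_divisors hd).ne'⟩
  rw [lam, ← liouville_apply hquot]
  simp

theorem beta_prime_pow_two_mul {p : ℕ} (hp : p.Prime) (k : ℕ) :
    beta (p ^ (2 * k)) = ∑ i ∈ range (2 * k + 1), (-1) ^ i * (p : ℤ) ^ i := by
  rw [beta, Nat.sum_divisors_prime_pow hp]
  refine sum_congr rfl fun i hi => ?_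
  have hi : i ≤ 2 * k := Nat.lt_succ_iff.mp (mem_range.mp hi)
  rw [Nat.pow_div hi hp.pos, lam, cardFactors_apply_prime_pow hp, mul_comm]
  push_cast
  rw [neg_one_pow_eq_pow_mod_two, neg_one_pow_eq_pow_mod_two (R := ℤ) i,
    show (2 * k - i) % 2 = i % 2 by omega]

theorem compSq_id_mul_liouville :
    (((ArithmeticFunction.id : ArithmeticFunction ℕ) : ArithmeticFunction ℤ) * liouville).compSq =
      pmul ((ArithmeticFunction.id : ArithmeticFunction ℕ) : ArithmeticFunction ℤ) moebius *
        (sigma 2 : ArithmeticFunction ℤ) := by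
  have hl := (isMultiplicative_id.natCast.mul isMultiplicative_liouville).compSq
  have hr := (isMultiplicative_id.natCast.pmul isMultiplicative_moebius).mul
    (isMultiplicative_sigma (k := 2)).natCast
  refine (IsMultiplicative.eq_iff_eq_on_prime_powers _ hl _ hr).2 fun p k hp => ?_
  rcases k with _ | k
  · rw [pow_zero, hl.map_one, hr.map_one]
  rw [compSq_apply, ← beta_eq_id_mul_liouville, ← pow_mul, mul_comm, beta_prime_pow_two_mul hp,
    alternating_sum_range_pow, ← intCoe_int moebius,
    pmul_id_moebius_mul_apply_prime_pow_succ _ hp, natCoe_apply, natCoe_apply,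
    sigma_apply_prime_pow hp, sigma_apply_prime_pow hp]
  push_cast
  simp only [mul_comm _ 2]

theorem stmt_14_general (n : ℕ) :
    beta (n ^ 2) =
      ∑ p ∈ n.divisorsAntidiagonal,
        (p.1 : ℤ) * (ArithmeticFunction.moebius p.1 : ℤ) *
          (ArithmeticFunction.sigma 2 p.2 : ℤ) := by
  rw [beta_eq_id_mul_liouville, ← compSq_apply, compSq_id_mul_liouville, mul_apply]
  simp [pmul_apply]

theorem stmt_14 (n : ℕ) (hn : 0 < n) :
    beta (n ^ 2) =
      ∑ p ∈ n.divisorsAntidiagonal,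
        (p.1 : ℤ) * (ArithmeticFunction.moebius p.1 : ℤ) *
          (ArithmeticFunction.sigma 2 p.2 : ℤ) :=
  stmt_14_general n
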